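/- arXiv:0708.2871 — 2 statements merged into one kernel-verified Lean document; each statement's English description precedes it below -/
import Mathlib

section
/- In any triangle with sides a, b, c, circumradius R, and inradius r, 1/(b+c−a) + 1/(c+a−b) + 1/(a+b−c) ≥ (1/(2r))·√(4 − 9r/(4R + r)). -/
/-!
With the Ravi substitution `x = s - a`, `y = s - b`, `z = s - c`, put `q = xy + yz + zx` and
`t = xyz`. Then `S² = s t`, `r S = t` and `4 R S = abc = s q - t`, so `9 r / (4R + r) = 9 t / (s q)`,
`r² = t / s`, and the left-hand side is `q / (2t)`. After squaring, the inequality becomes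
`q³ + 9 t² ≥ 4 s q t`, which is Schur's inequality for `xy`, `yz`, `zx`.
-/

theorem schur_cubic {u v w : ℝ} (hu : 0 ≤ u) (hv : 0 ≤ v) (hw : 0 ≤ w) :
    4 * (u + v + w) * (u * v + v * w + w * u) ≤ (u + v + w) ^ 3 + 9 * (u * v * w) := by
  nlinarith [mul_nonneg hu (sq_nonneg (u - v)), mul_nonneg hv (sq_nonneg (v - w)),
    mul_nonneg hw (sq_nonneg (w - u)), mul_nonneg hu (sq_nonneg (u - w)),
    mul_nonneg hv (sq_nonneg (v - u)), mul_nonneg hw (sq_nonneg (w - v)),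
    mul_nonneg (mul_nonneg hu hv) hw]

theorem four_sub_div_le_sq_div {x y z : ℝ} (hx : 0 < x) (hy : 0 < y) (hz : 0 < z) :
    4 - 9 * (x * y * z) / ((x + y + z) * (x * y + y * z + z * x))
      ≤ (x * y + y * z + z * x) ^ 2 / ((x + y + z) * (x * y * z)) := by
  have schur := schur_cubic (mul_pos hx hy).le (mul_pos hy hz).le (mul_pos hz hx).le
  rw [sub_div' (by positivity), div_le_div_iff₀ (by positivity) (by positivity)]
  linear_combination (x + y + z) * schur

theorem inradius_circumradius_bound_ravi {x y z s S R r : ℝ} (hx : 0 < x) (hy : 0 < y)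
    (hz : 0 < z) (hs : s = x + y + z) (hS : S = √(s * x * y * z))
    (hR : R = (y + z) * (z + x) * (x + y) / (4 * S)) (hr : r = S / s) :
    1 / (2 * r) * √(4 - 9 * r / (4 * R + r)) ≤ 1 / (2 * x) + 1 / (2 * y) + 1 / (2 * z) := by
  have hs0 : 0 < s := by rw [hs]; positivity
  have hS0 : 0 < S := by rw [hS]; positivity
  have hS2 : S ^ 2 = s * x * y * z := by rw [hS, Real.sq_sqrt (by positivity)]
  have hr0 : 0 < r := by rw [hr]; positivity
  have hrS : r * S = x * y * z := by
    rw [hr]; field_simp; linear_combination hS2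
  have hRrS : (4 * R + r) * S = s * (x * y + y * z + z * x) := by
    rw [add_mul, hrS, hR, hs]; field_simp; ring
  have h9 : 9 * r / (4 * R + r) = 9 * (x * y * z) / (s * (x * y + y * z + z * x)) := by
    rw [← hRrS, ← hrS]; field_simp
  have hr2 : r ^ 2 = x * y * z / s := by
    rw [hr, div_pow, hS2]; field_simp
  calc 1 / (2 * r) * √(4 - 9 * r / (4 * R + r))
      ≤ 1 / (2 * r) * (r * (x * y + y * z + z * x) / (x * y * z)) := by
        gcongr
        rw [h9, Real.sqrt_le_left (by positivity), div_pow, mul_pow, hr2, hs]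
        convert four_sub_div_le_sq_div hx hy hz using 1
        field_simp
    _ = 1 / (2 * x) + 1 / (2 * y) + 1 / (2 * z) := by
        field_simp; ring

theorem application_one_general (a b c : ℝ)
    (hA : a < b + c) (hB : b < c + a) (hC : c < a + b) (s S : ℝ) (hs : s = (a + b + c) / 2)
    (hS : S = Real.sqrt (s * (s - a) * (s - b) * (s - c))) (R : ℝ) (hR : R = a * b * c / (4 * S)) (r : ℝ) (hr : r = S / s) :
    1 / (b + c - a) + 1 / (c + a - b) + 1 / (a + b - c)
      ≥ 1 / (2 * r) * Real.sqrt (4 - 9 * r / (4 * R + r)) := by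
  have hbca : b + c - a = 2 * (s - a) := by rw [hs]; ring
  have hcab : c + a - b = 2 * (s - b) := by rw [hs]; ring
  have habc : a + b - c = 2 * (s - c) := by rw [hs]; ring
  have hRavi : a * b * c = ((s - b) + (s - c)) * ((s - c) + (s - a)) * ((s - a) + (s - b)) := by
    rw [hs]; ring
  rw [hbca, hcab, habc, ge_iff_le]
  rw [hRavi] at hR
  exact inradius_circumradius_bound_ravi (by linarith) (by linarith) (by linarith)
    (by rw [hs]; ring) hS hR hr

theorem application_one (a b c : ℝ) (ha : 0 < a) (hb : 0 < b) (hc : 0 < c)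
    (hA : a < b + c) (hB : b < c + a) (hC : c < a + b) (s S : ℝ) (hs : s = (a + b + c) / 2)
    (hS : S = Real.sqrt (s * (s - a) * (s - b) * (s - c))) (R : ℝ) (hR : R = a * b * c / (4 * S)) (r : ℝ) (hr : r = S / s) :
    1 / (b + c - a) + 1 / (c + a - b) + 1 / (a + b - c)
      ≥ 1 / (2 * r) * Real.sqrt (4 - 9 * r / (4 * R + r)) :=
  application_one_general a b c hA hB hC s S hs hS R hR r hr
end

section
/- In any triangle with sides a, b, c, circumradius R, and inradius r, 1/(b+c−a)² + 1/(c+a−b)² + 1/(a+b−c)² ≥ (1/r²)·(1/2 − 9r/(4(4R + r))). -/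
/-!
With the Ravi substitution a = y + z, b = z + x, c = x + y one has r² = xyz/(x+y+z) and
r(4R + r) = xy + yz + zx, so the inequality becomes a rational inequality in x, y, z > 0.
Cleared of denominators it is Schur's inequality for yz, zx, xy.
-/

theorem schur_inequality {u v w : ℝ} (hu : 0 ≤ u) (hv : 0 ≤ v) (hw : 0 ≤ w) :
    0 ≤ u * (u - v) * (u - w) + v * (v - u) * (v - w) + w * (w - u) * (w - v) := by
  nlinarith [mul_nonneg hu (sq_nonneg (u - v)), mul_nonneg hv (sq_nonneg (v - w)),
    mul_nonneg hw (sq_nonneg (w - u)), mul_nonneg hu (sq_nonneg (u - w)),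
    mul_nonneg hv (sq_nonneg (u - v)), mul_nonneg hw (sq_nonneg (v - w))]

theorem exists_ravi_substitution {a b c : ℝ} (hA : a < b + c) (hB : b < c + a) (hC : c < a + b) :
    ∃ x y z : ℝ, 0 < x ∧ 0 < y ∧ 0 < z ∧ a = y + z ∧ b = z + x ∧ c = x + y :=
  ⟨(b + c - a) / 2, (c + a - b) / 2, (a + b - c) / 2, by linarith, by linarith, by linarith,
    by ring, by ring, by ring⟩

theorem inv_sq_add_inv_sq_add_inv_sq_ge {x y z : ℝ} (hx : 0 < x) (hy : 0 < y) (hz : 0 < z) :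
    (x + y + z) / (2 * (x * y * z)) - 9 / (4 * (x * y + y * z + z * x)) ≤
      1 / (2 * x) ^ 2 + 1 / (2 * y) ^ 2 + 1 / (2 * z) ^ 2 := by
  have schur := schur_inequality (mul_pos hy hz).le (mul_pos hz hx).le (mul_pos hx hy).le
  rw [← sub_nonneg]
  have key : 1 / (2 * x) ^ 2 + 1 / (2 * y) ^ 2 + 1 / (2 * z) ^ 2 -
      ((x + y + z) / (2 * (x * y * z)) - 9 / (4 * (x * y + y * z + z * x))) =
      (y * z * (y * z - z * x) * (y * z - x * y) + z * x * (z * x - y * z) * (z * x - x * y) +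
        x * y * (x * y - y * z) * (x * y - z * x)) /
        (4 * (x * y * z) ^ 2 * (x * y + y * z + z * x)) := by
    field_simp
    ring
  rw [key]
  exact div_nonneg schur (by positivity)

theorem inradius_sq_eq_of_ravi {x y z S : ℝ} (hx : 0 < x) (hy : 0 < y) (hz : 0 < z)
    (hS : S = √((x + y + z) * x * y * z)) :
    (S / (x + y + z)) ^ 2 = x * y * z / (x + y + z) := by
  rw [div_pow, hS, Real.sq_sqrt (by positivity)]
  field_simp

theorem inradius_mul_four_circumradius_add_inradius_of_ravi {x y z S : ℝ}
    (hx : 0 < x) (hy : 0 < y) (hz : 0 < z) (hS : S = √((x + y + z) * x * y * z)) :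
    S / (x + y + z) * (4 * ((y + z) * (z + x) * (x + y) / (4 * S)) + S / (x + y + z)) =
      x * y + y * z + z * x := by
  have hS_pos : 0 < S := hS ▸ by positivity
  have hS_sq : S ^ 2 = (x + y + z) * x * y * z := hS ▸ Real.sq_sqrt (by positivity)
  field_simp
  linear_combination hS_sq

theorem application_three_general (a b c : ℝ)
    (hA : a < b + c) (hB : b < c + a) (hC : c < a + b) (s S : ℝ) (hs : s = (a + b + c) / 2)
    (hS : S = Real.sqrt (s * (s - a) * (s - b) * (s - c))) (R : ℝ) (hR : R = a * b * c / (4 * S)) (r : ℝ) (hr : r = S / s) :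
    1 / (b + c - a) ^ 2 + 1 / (c + a - b) ^ 2 + 1 / (a + b - c) ^ 2
      ≥ 1 / r ^ 2 * (1 / 2 - 9 * r / (4 * (4 * R + r))) := by
  obtain ⟨x, y, z, hx, hy, hz, rfl, rfl, rfl⟩ := exists_ravi_substitution hA hB hC
  obtain rfl : s = x + y + z := by rw [hs]; ring
  replace hS : S = √((x + y + z) * x * y * z) := by rw [hS]; congr 1; ring
  have hr_sq : r ^ 2 = x * y * z / (x + y + z) := hr ▸ inradius_sq_eq_of_ravi hx hy hz hS
  have hr_mul : r * (4 * R + r) = x * y + y * z + z * x :=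
    hr ▸ hR ▸ inradius_mul_four_circumradius_add_inradius_of_ravi hx hy hz hS
  have hr_pos : 0 < r := hr ▸ hS ▸ by positivity
  calc 1 / r ^ 2 * (1 / 2 - 9 * r / (4 * (4 * R + r)))
      = 1 / (2 * r ^ 2) - 9 / (4 * (r * (4 * R + r))) := by
        field_simp
    _ = (x + y + z) / (2 * (x * y * z)) - 9 / (4 * (x * y + y * z + z * x)) := by
        rw [hr_sq, hr_mul]; field_simp
    _ ≤ 1 / (2 * x) ^ 2 + 1 / (2 * y) ^ 2 + 1 / (2 * z) ^ 2 :=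
        inv_sq_add_inv_sq_add_inv_sq_ge hx hy hz
    _ = 1 / (z + x + (x + y) - (y + z)) ^ 2 + 1 / (x + y + (y + z) - (z + x)) ^ 2 +
          1 / (y + z + (z + x) - (x + y)) ^ 2 := by ring

theorem application_three (a b c : ℝ) (ha : 0 < a) (hb : 0 < b) (hc : 0 < c)
    (hA : a < b + c) (hB : b < c + a) (hC : c < a + b) (s S : ℝ) (hs : s = (a + b + c) / 2)
    (hS : S = Real.sqrt (s * (s - a) * (s - b) * (s - c))) (R : ℝ) (hR : R = a * b * c / (4 * S)) (r : ℝ) (hr : r = S / s) :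
    1 / (b + c - a) ^ 2 + 1 / (c + a - b) ^ 2 + 1 / (a + b - c) ^ 2
      ≥ 1 / r ^ 2 * (1 / 2 - 9 * r / (4 * (4 * R + r))) :=
  application_three_general a b c hA hB hC s S hs hS R hR r hr
end
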